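/- arXiv:math/0602587 — 4 statements merged into one kernel-verified Lean document; each statement's English description precedes it below -/
import Mathlib

section
/- For any countable collection of sets A_i ⊆ ℝ^d, the relative interior of the convex hull of the closure of the union of the A_i is contained in the convex hull of the union of the relative interiors of the convex hulls of the A_i: ri(conv(cl(⋃_{i=1}^∞ A_i))) ⊆ conv(⋃_{i=1}^∞ ri(conv A_i)). -/
/-!
Put `E = conv ⋃ ri (conv Aᵢ)`. Since every convex set lies in the closure of its relative interior,
`E ⊆ conv (cl ⋃ Aᵢ) ⊆ cl E`. For convex `E`, a set squeezed between `E` and `cl E` has its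
relative interior inside `ri E`: a point `x` of that relative interior can be pushed slightly
beyond itself, away from some `z ∈ ri E`, to a point `w ∈ cl E`, and the open segment from `z`
to `w` lies in `ri E`.
-/

open Set Filter Topology

variable {V : Type*} [NormedAddCommGroup V] [NormedSpace ℝ V]

theorem mem_intrinsicInterior_iff_mem_nhdsWithin {s : Set V} {x : V} :
    x ∈ intrinsicInterior ℝ s ↔ x ∈ affineSpan ℝ s ∧ s ∈ 𝓝[affineSpan ℝ s] x := by
  rw [mem_intrinsicInterior]
  constructor
  · rintro ⟨y, hy, rfl⟩
    rw [mem_interior_iff_mem_nhds, mem_nhds_subtype_iff_nhdsWithin] at hy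
    exact ⟨y.2, mem_of_superset hy (image_preimage_subset _ _)⟩
  · rintro ⟨hx, hs⟩
    refine ⟨⟨x, hx⟩, ?_, rfl⟩
    rw [mem_interior_iff_mem_nhds, mem_nhds_subtype_iff_nhdsWithin]
    refine mem_of_superset (inter_mem self_mem_nhdsWithin hs) ?_
    rintro y ⟨hy, hys⟩
    exact ⟨⟨y, hy⟩, hys, rfl⟩

theorem exists_pos_add_smul_sub_mem_of_mem_intrinsicInterior {s : Set V} {x z : V}
    (hx : x ∈ intrinsicInterior ℝ s) (hz : z ∈ affineSpan ℝ s) :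
    ∃ t : ℝ, 0 < t ∧ x + t • (x - z) ∈ s := by
  obtain ⟨hxs, hs⟩ := mem_intrinsicInterior_iff_mem_nhdsWithin.mp hx
  have hline : Tendsto (fun t : ℝ => x + t • (x - z)) (𝓝 0) (𝓝[affineSpan ℝ s] x) := by
    refine tendsto_nhdsWithin_iff.mpr ⟨?_, Eventually.of_forall fun t => ?_⟩
    · exact Continuous.tendsto' (by fun_prop) _ _ (by simp)
    · simpa [vadd_eq_add, add_comm] using AffineSubspace.vadd_mem_of_mem_direction
        (Submodule.smul_mem _ t (AffineSubspace.vsub_mem_direction hxs hz)) hxs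
  have hsmall : ∀ᶠ t in 𝓝[>] (0 : ℝ), 0 < t ∧ x + t • (x - z) ∈ s :=
    eventually_mem_nhdsWithin.and (nhdsWithin_le_nhds (hline.eventually hs))
  exact hsmall.exists

variable [FiniteDimensional ℝ V]

theorem Convex.combo_intrinsicInterior_closure_mem_intrinsicInterior {s : Set V}
    (hs : Convex ℝ s) {x y : V} (hx : x ∈ intrinsicInterior ℝ s) (hy : y ∈ closure s)
    {a b : ℝ} (ha : 0 < a) (hb : 0 ≤ b) (hab : a + b = 1) :
    a • x + b • y ∈ intrinsicInterior ℝ s := by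
  rw [mem_intrinsicInterior_iff_mem_nhdsWithin] at hx ⊢
  obtain ⟨hxA, hsx⟩ := hx
  obtain ⟨ε, hε, hball⟩ := Metric.mem_nhdsWithin_iff.mp hsx
  have hyA : y ∈ affineSpan ℝ s :=
    closure_minimal (subset_affineSpan ℝ s) (affineSpan ℝ s).closed_of_finiteDimensional hy
  have hcomb : a • x + b • y = b • (y -ᵥ x) +ᵥ x := by
    rw [vsub_eq_sub, vadd_eq_add, eq_sub_of_add_eq hab]; module
  refine ⟨hcomb ▸ AffineSubspace.smul_vsub_vadd_mem _ b hyA hxA hxA,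
    Metric.mem_nhdsWithin_iff.mpr ⟨a * ε / 2, by positivity, ?_⟩⟩
  rintro q ⟨hq, hqA⟩
  -- Approximate `y` by `y' ∈ s` and solve `q = a • p + b • y'` for `p`, which lands near `x`.
  obtain ⟨y', hy's, hyy'⟩ := Metric.mem_closure_iff.mp hy (a * ε / 2) (by positivity)
  set p := a⁻¹ • (q - b • y') with hp
  have hqp : a • p + b • y' = q := by rw [hp, smul_inv_smul₀ ha.ne', sub_add_cancel]
  have hpA : p ∈ affineSpan ℝ s := by
    have hp' : p = (b / a) • (q -ᵥ y') +ᵥ q := by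
      rw [hp, vsub_eq_sub, vadd_eq_add]
      match_scalars <;> field_simp
      linarith
    exact hp' ▸ AffineSubspace.smul_vsub_vadd_mem _ _ hqA (subset_affineSpan ℝ s hy's) hqA
  have hpx : dist p x < ε := by
    have hdiff : p - x = a⁻¹ • ((q - (a • x + b • y)) + b • (y - y')) := by
      rw [hp]; match_scalars <;> field_simp; ring
    have hby : ‖b • (y - y')‖ < a * ε / 2 := by
      rw [norm_smul, Real.norm_of_nonneg hb, ← dist_eq_norm]
      exact (mul_le_of_le_one_left dist_nonneg (by linarith)).trans_lt hyy'
    calc dist p x = a⁻¹ * ‖(q - (a • x + b • y)) + b • (y - y')‖ := by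
          rw [dist_eq_norm, hdiff, norm_smul, Real.norm_of_nonneg (inv_pos.mpr ha).le]
      _ < a⁻¹ * (a * ε / 2 + a * ε / 2) := by
          gcongr
          exact (norm_add_le _ _).trans_lt (add_lt_add (dist_eq_norm q _ ▸ hq) hby)
      _ = ε := by field_simp; ring
  exact hqp ▸ hs (hball ⟨hpx, hpA⟩) hy's ha.le hb hab

theorem Convex.subset_closure_intrinsicInterior {s : Set V} (hs : Convex ℝ s) :
    s ⊆ closure (intrinsicInterior ℝ s) := by
  intro y hy
  obtain ⟨x, hx⟩ := Set.Nonempty.intrinsicInterior hs ⟨y, hy⟩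
  have hseg : openSegment ℝ x y ⊆ intrinsicInterior ℝ s := by
    rintro _ ⟨a, b, ha, hb, hab, rfl⟩
    exact hs.combo_intrinsicInterior_closure_mem_intrinsicInterior hx (subset_closure hy) ha hb.le
      hab
  exact closure_mono hseg (by rw [closure_openSegment]; exact right_mem_segment ℝ x y)

theorem Convex.intrinsicInterior_subset_of_subset_closure {s t : Set V} (hs : Convex ℝ s)
    (hst : s ⊆ t) (hts : t ⊆ closure s) : intrinsicInterior ℝ t ⊆ intrinsicInterior ℝ s := by
  intro x hx
  obtain ⟨z, hz⟩ : (intrinsicInterior ℝ s).Nonempty :=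
    (closure_nonempty_iff.mp ⟨x, hts (intrinsicInterior_subset hx)⟩).intrinsicInterior hs
  obtain ⟨r, hr, hw⟩ := exists_pos_add_smul_sub_mem_of_mem_intrinsicInterior hx
    (subset_affineSpan ℝ t (hst (intrinsicInterior_subset hz)))
  have hx_eq : (r / (1 + r)) • z + (1 / (1 + r)) • (x + r • (x - z)) = x := by
    match_scalars <;> field_simp; ring
  exact hx_eq ▸ hs.combo_intrinsicInterior_closure_mem_intrinsicInterior hz (hts hw)
    (by positivity) (by positivity) (by field_simp; ring)

/-- For any countable collection of sets `A i ⊆ ℝ^d`,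
`ri (conv (cl (⋃ i, A i))) ⊆ conv (⋃ i, ri (conv (A i)))`. -/
theorem ri_conv_cl_iUnion_subset {d : ℕ}
    (A : ℕ → Set (EuclideanSpace ℝ (Fin d))) :
    intrinsicInterior ℝ (convexHull ℝ (closure (⋃ i, A i))) ⊆
      convexHull ℝ (⋃ i, intrinsicInterior ℝ (convexHull ℝ (A i))) := by
  set E := convexHull ℝ (⋃ i, intrinsicInterior ℝ (convexHull ℝ (A i)))
  have hE : Convex ℝ E := convex_convexHull ℝ _
  have hE_sub : E ⊆ convexHull ℝ (closure (⋃ i, A i)) :=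
    convexHull_min (iUnion_subset fun i => intrinsicInterior_subset.trans
      (convexHull_mono ((subset_iUnion A i).trans subset_closure))) (convex_convexHull ℝ _)
  have hsub_E : convexHull ℝ (closure (⋃ i, A i)) ⊆ closure E := by
    refine convexHull_min (closure_minimal (iUnion_subset fun i => ?_) isClosed_closure) hE.closure
    calc A i ⊆ convexHull ℝ (A i) := subset_convexHull ℝ _
      _ ⊆ closure (intrinsicInterior ℝ (convexHull ℝ (A i))) :=
        (convex_convexHull ℝ _).subset_closure_intrinsicInterior
      _ ⊆ closure E :=
        closure_mono ((subset_convexHull ℝ _).trans' (subset_iUnion_of_subset i le_rfl))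
  exact (hE.intrinsicInterior_subset_of_subset_closure hE_sub hsub_E).trans intrinsicInterior_subset
end

section
/- If F : Ω → 𝒫(ℝ^d) is an ℋ-measurable set-valued map with nonempty convex values whose graph lies in ℋ ⊗ ℬ(ℝ^d), then the set-valued map ω ↦ ri(F(ω)) (relative interior) also has graph in ℋ ⊗ ℬ(ℝ^d) and admits ℋ-measurable selectors. -/
/-!
Take a Castaing representation of `F`: measurable `D n` with
`closure {D n ω | n} = closure (F ω)`, obtained from Kuratowski–Ryll-Nardzewski selectors of the
pieces `F ω ∩ ball`. For a convex `C` with such a dense sequence `D`, a point `x` lies in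
`ri C` iff `x ∈ closure C` and, for every `n`, the ray from `D n` through `x` stays in
`closure C` a little beyond `x`. Inside the affine span this follows from a separation
argument, and it suffices to test rational step lengths. So the graph of `ri F` is cut out by
countably many measurable conditions. A combination `∑ w n • D n / ∑ w n` with strictly positive
weights lies in `ri C`: removing the `n`-th term leaves a point of `closure C` beyond it on the
ray from `D n`. The weights `2⁻ⁿ / (1 + ‖D n ω‖)` make this combination converge and depend
measurably on `ω`.
-/

open MeasureTheory Set Filter Topology Metric TopologicalSpace

section Convex

variable {V : Type*} [NormedAddCommGroup V] [NormedSpace ℝ V]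

theorem Convex.exists_rat_pos_add_smul_mem {K : Set V} (hK : Convex ℝ K) {x v : V} (hx : x ∈ K)
    {q : ℝ} (hq : 0 < q) (h : x + q • v ∈ K) : ∃ r : ℚ, 0 < r ∧ x + (r : ℝ) • v ∈ K := by
  obtain ⟨r, hr0, hrq⟩ := exists_rat_btwn hq
  refine ⟨r, by exact_mod_cast hr0, ?_⟩
  have := hK.add_smul_mem hx h ⟨div_nonneg hr0.le hq.le, (div_le_one hq).2 hrq.le⟩
  rwa [smul_smul, div_mul_cancel₀ _ hq.ne'] at this

theorem exists_rat_pos_add_smul_sub_mem_of_mem_interior {C : Set V} {x : V}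
    (hx : x ∈ interior C) (y : V) : ∃ q : ℚ, 0 < q ∧ x + (q : ℝ) • (x - y) ∈ C := by
  have hcont : Tendsto (fun t : ℝ => x + t • (x - y)) (𝓝 0) (𝓝 x) := by
    simpa using ((continuous_id.smul continuous_const).const_add x).tendsto (0 : ℝ)
  obtain ⟨ε, hε, hball⟩ := Metric.mem_nhds_iff.1 (hcont (mem_interior_iff_mem_nhds.1 hx))
  obtain ⟨q, hq0, hqε⟩ := exists_rat_btwn hε
  refine ⟨q, by exact_mod_cast hq0, hball ?_⟩
  rwa [mem_ball, Real.dist_0_eq_abs, abs_of_pos hq0]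

theorem Convex.mem_interior_of_forall_add_smul_sub_mem_closure {C : Set V} (hC : Convex ℝ C)
    (hint : (interior C).Nonempty) {D : ℕ → V} (hdense : C ⊆ closure (range D)) {x : V}
    (h : ∀ n, ∃ q : ℝ, 0 < q ∧ x + q • (x - D n) ∈ closure C) : x ∈ interior C := by
  by_contra hx
  rw [← hC.interior_closure_eq_interior_of_nonempty_interior hint] at hx
  obtain ⟨f, u, hfu, hux⟩ := geometric_hahn_banach_open hC.closure.interior isOpen_interior
    (convex_singleton x) (disjoint_singleton_right.2 hx)
  have hle : closure C ⊆ {z | f z ≤ u} := by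
    rw [← hC.closure_interior_eq_closure_of_nonempty_interior hint]
    exact closure_minimal (fun z hz => (hfu z (interior_mono subset_closure hz)).le)
      (isClosed_le f.continuous continuous_const)
  obtain ⟨a, ha⟩ := hint
  obtain ⟨_, hfD, n, rfl⟩ := mem_closure_iff.1 (hdense (interior_subset ha))
    {z | f z < u} (isOpen_lt f.continuous continuous_const)
    (hfu a (interior_mono subset_closure ha))
  obtain ⟨q, hq, hmem⟩ := h n
  have hfx : u ≤ f x := hux x rfl
  have hfq : f (x + q • (x - D n)) ≤ u := hle hmem
  simp only [map_add, map_smul, map_sub, smul_eq_mul] at hfq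
  nlinarith [mul_pos hq (show 0 < f x - f (D n) from sub_pos.2 (hfD.trans_le hfx))]

theorem AffineMap.map_add_smul_sub {k P W : Type*} [Ring k] [AddCommGroup P] [Module k P]
    [AddCommGroup W] [Module k W] (f : P →ᵃ[k] W) (x y : P) (t : k) :
    f (x + t • (x - y)) = f x + t • (f x - f y) := by
  have := f.map_vadd x (t • (x -ᵥ y))
  rwa [map_smul, f.linearMap_vsub, vadd_eq_add, vadd_eq_add, vsub_eq_sub, vsub_eq_sub, add_comm,
    add_comm (t • _)] at this

theorem Convex.inv_smul_mem_of_hasSum {ι : Type*} {K : Set V} (hK : Convex ℝ K)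
    (hKc : IsClosed K) {z : ι → V} (hz : ∀ i, z i ∈ K) {w : ι → ℝ} (hw : ∀ i, 0 ≤ w i) {W : ℝ}
    (hW : HasSum w W) (hW0 : 0 < W) {S : V} (hS : HasSum (fun i => w i • z i) S) :
    W⁻¹ • S ∈ K := by
  refine hKc.mem_of_tendsto (Tendsto.smul (Tendsto.inv₀ hW hW0.ne') hS) ?_
  filter_upwards [Tendsto.eventually hW (eventually_gt_nhds hW0)] with s hs
  exact hK.centerMass_mem (fun i _ => hw i) hs fun i _ => hz i

variable {E : Type*} [NormedAddCommGroup E] [NormedSpace ℝ E] [FiniteDimensional ℝ E]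

theorem Convex.exists_affineIsometry_image_interior_preimage {C : Set E} (hC : Convex ℝ C)
    (hne : C.Nonempty) :
    ∃ ψ : (affineSpan ℝ C).direction →ᵃⁱ[ℝ] E, range ψ = affineSpan ℝ C ∧
      (interior (ψ ⁻¹' C)).Nonempty ∧ ψ '' interior (ψ ⁻¹' C) = intrinsicInterior ℝ C := by
  obtain ⟨p, hp⟩ := hne
  have : Nonempty (affineSpan ℝ C) := ⟨⟨p, subset_affineSpan ℝ C hp⟩⟩
  let e := (AffineIsometryEquiv.constVSub ℝ (⟨p, subset_affineSpan ℝ C hp⟩ : affineSpan ℝ C)).symm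
  let ψ := (affineSpan ℝ C).subtypeₐᵢ.comp e.toAffineIsometry
  have hri : ψ '' interior (ψ ⁻¹' C) = intrinsicInterior ℝ C :=
    image_interior_preimage_comp e e.toHomeomorph.isHomeomorph Subtype.val C
  refine ⟨ψ, ?_, ?_, hri⟩
  · change range (Subtype.val ∘ e) = _
    rw [range_comp, e.surjective.range_eq, image_univ, Subtype.range_coe]
  · rw [← image_nonempty, hri]
    exact Set.Nonempty.intrinsicInterior hC ⟨p, hp⟩

theorem Convex.mem_intrinsicInterior_iff_of_closure_range_eq {C : Set E} (hC : Convex ℝ C)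
    {D : ℕ → E} (hD : closure (range D) = closure C) {x : E} :
    x ∈ intrinsicInterior ℝ C ↔
      x ∈ closure C ∧ ∀ n, ∃ q : ℚ, 0 < q ∧ x + (q : ℝ) • (x - D n) ∈ closure C := by
  rcases C.eq_empty_or_nonempty with rfl | hne
  · simp
  obtain ⟨ψ, hψ, hint, hri⟩ := hC.exists_affineIsometry_image_interior_preimage hne
  have hrange : closure C ⊆ range ψ := by
    rw [hψ]
    exact closure_minimal (subset_affineSpan ℝ C) (affineSpan ℝ C).closed_of_finiteDimensional
  have hemb := ψ.isometry.isEmbedding.closure_eq_preimage_closure_image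
  have hcl : closure (ψ ⁻¹' C) = ψ ⁻¹' closure C := by
    rw [hemb, image_preimage_eq_of_subset (subset_closure.trans hrange)]
  choose D₀ hD₀ using fun n => hrange (hD ▸ subset_closure (mem_range_self n))
  have hcl₀ : closure (range D₀) = ψ ⁻¹' closure C := by
    rw [hemb, ← range_comp, show ψ ∘ D₀ = D from funext hD₀, hD]
  have hψ_ray : ∀ x₀ n (q : ℝ), ψ (x₀ + q • (x₀ - D₀ n)) = ψ x₀ + q • (ψ x₀ - D n) :=
    fun x₀ n q => hD₀ n ▸ ψ.toAffineMap.map_add_smul_sub x₀ (D₀ n) q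
  constructor
  · intro hx
    rw [← hri] at hx
    obtain ⟨x₀, hx₀, rfl⟩ := hx
    refine ⟨show x₀ ∈ ψ ⁻¹' closure C from hcl ▸ subset_closure (interior_subset hx₀),
      fun n => ?_⟩
    obtain ⟨q, hq, hmem⟩ := exists_rat_pos_add_smul_sub_mem_of_mem_interior hx₀ (D₀ n)
    exact ⟨q, hq, hψ_ray x₀ n q ▸ subset_closure hmem⟩
  · rintro ⟨hx, h⟩
    obtain ⟨x₀, rfl⟩ := hrange hx
    rw [← hri]
    have hC₀ : Convex ℝ (ψ ⁻¹' C) := hC.affine_preimage ψ.toAffineMap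
    refine mem_image_of_mem ψ (hC₀.mem_interior_of_forall_add_smul_sub_mem_closure hint
      (hcl₀ ▸ preimage_mono subset_closure : ψ ⁻¹' C ⊆ closure (range D₀)) fun n => ?_)
    obtain ⟨q, hq, hmem⟩ := h n
    refine ⟨q, by exact_mod_cast hq, ?_⟩
    rwa [hcl, mem_preimage, hψ_ray]

theorem Convex.inv_smul_mem_intrinsicInterior_of_hasSum {C : Set E} (hC : Convex ℝ C)
    {D : ℕ → E} (hD : closure (range D) = closure C) {w : ℕ → ℝ} (hw : ∀ n, 0 < w n) {W : ℝ}
    (hW : HasSum w W) {S : E} (hS : HasSum (fun n => w n • D n) S) :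
    W⁻¹ • S ∈ intrinsicInterior ℝ C := by
  classical
  have hDC : ∀ n, D n ∈ closure C := fun n => hD ▸ subset_closure (mem_range_self n)
  have hW0 : 0 < W := hasSum_lt (fun n => (hw n).le) (hw 0) hasSum_zero hW
  have hy : W⁻¹ • S ∈ closure C :=
    hC.closure.inv_smul_mem_of_hasSum isClosed_closure hDC (fun n => (hw n).le) hW hW0 hS
  refine (hC.mem_intrinsicInterior_iff_of_closure_range_eq hD).2 ⟨hy, fun n => ?_⟩
  have hWn : 0 < W - w n := by
    have := sum_le_hasSum {n, n + 1} (fun i _ => (hw i).le) hW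
    rw [Finset.sum_pair (by omega)] at this
    linarith [hw (n + 1)]
  have hv : HasSum (Function.update w n 0) (W - w n) := by
    simpa [sub_eq_neg_add] using hW.update n 0
  have hvD : HasSum (fun i => Function.update w n 0 i • D i) (S - w n • D n) := by
    convert hS.update n 0 using 1
    · ext i
      rcases eq_or_ne i n with rfl | hi <;> simp [*]
    · abel
  have hz := hC.closure.inv_smul_mem_of_hasSum isClosed_closure hDC
    (fun i => by rcases eq_or_ne i n with rfl | hi <;> simp [*, (hw i).le]) hv hWn hvD
  have hray : W⁻¹ • S + (w n / (W - w n)) • (W⁻¹ • S - D n) =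
      (W - w n)⁻¹ • (S - w n • D n) := by
    match_scalars <;> field_simp
    ring
  exact hC.closure.exists_rat_pos_add_smul_mem hy (div_pos (hw n) hWn) (hray ▸ hz)

end Convex

section Measurable

variable {Ω X : Type*} [MeasurableSpace Ω]

/-- The `ℋ`-measurability of a set-valued map in the statement (Effros measurability). -/
def IsWeaklyMeasurable [TopologicalSpace X] (F : Ω → Set X) : Prop :=
  ∀ V : Set X, IsOpen V → MeasurableSet {ω | (F ω ∩ V).Nonempty}

namespace IsWeaklyMeasurable

theorem inter_isOpen [TopologicalSpace X] {F : Ω → Set X} (hF : IsWeaklyMeasurable F) {U : Set X}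
    (hU : IsOpen U) : IsWeaklyMeasurable fun ω => F ω ∩ U := fun V hV => by
  simpa only [inter_assoc] using hF _ (hU.inter hV)

theorem piecewise [TopologicalSpace X] {F G : Ω → Set X} {A : Set Ω} [DecidablePred (· ∈ A)]
    (hA : MeasurableSet A) (hF : IsWeaklyMeasurable F) (hG : IsWeaklyMeasurable G) :
    IsWeaklyMeasurable (A.piecewise F G) := fun V hV => by
  simp only [Set.piecewise, apply_ite (fun s => (s ∩ V).Nonempty)]
  exact measurableSet_setOfPred.2 (Measurable.ite hA (measurableSet_setOfPred.1 (hF V hV))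
    (measurableSet_setOfPred.1 (hG V hV)))

variable [PseudoMetricSpace X] {F : Ω → Set X}

theorem exists_measurable_refine (hF : IsWeaklyMeasurable F) {p : ℕ → X} (hp : DenseRange p)
    {r : ℝ} (hr : 0 < r) {k : Ω → ℕ} (hk : Measurable k)
    (hkF : ∀ ω, (F ω ∩ ball (p (k ω)) r).Nonempty) :
    ∃ k' : Ω → ℕ, Measurable k' ∧
      ∀ ω, (F ω ∩ ball (p (k' ω)) (r / 2)).Nonempty ∧ dist (p (k' ω)) (p (k ω)) < 2 * r := by
  classical
  have hex : ∀ ω, ∃ j, (F ω ∩ ball (p j) (r / 2)).Nonempty ∧ dist (p j) (p (k ω)) < 2 * r := by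
    intro ω
    obtain ⟨x, hxF, hxk⟩ := hkF ω
    obtain ⟨j, hj⟩ := hp.exists_dist_lt x (half_pos hr)
    refine ⟨j, ⟨x, hxF, hj⟩, ?_⟩
    calc dist (p j) (p (k ω)) ≤ dist x (p j) + dist x (p (k ω)) := dist_triangle_left _ _ _
      _ < r / 2 + r := add_lt_add hj hxk
      _ ≤ 2 * r := by linarith
  refine ⟨fun ω => Nat.find (hex ω), measurable_find hex fun j => ?_,
    fun ω => Nat.find_spec (hex ω)⟩
  exact (hF _ isOpen_ball).inter
    (hk (MeasurableSet.of_discrete (s := {i | dist (p j) (p i) < 2 * r})))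

variable [MeasurableSpace X] [CompleteSpace X] [SecondCountableTopology X] [Nonempty X]
  [BorelSpace X]

theorem exists_measurable_mem_closure (hF : IsWeaklyMeasurable F)
    (hne : ∀ ω, (F ω).Nonempty) : ∃ f : Ω → X, Measurable f ∧ ∀ ω, f ω ∈ closure (F ω) := by
  classical
  obtain ⟨p, hp⟩ := exists_dense_seq X
  let S : ℕ → Set (Ω → ℕ) := fun m =>
    {k | Measurable k ∧ ∀ ω, (F ω ∩ ball (p (k ω)) ((1 / 2) ^ m)).Nonempty}
  have hstart : ∃ k, k ∈ S 0 := by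
    have hex : ∀ ω, ∃ j, (F ω ∩ ball (p j) 1).Nonempty := fun ω => by
      obtain ⟨x, hx⟩ := hne ω
      obtain ⟨j, hj⟩ := hp.exists_dist_lt x one_pos
      exact ⟨j, x, hx, hj⟩
    exact ⟨_, measurable_find hex fun j => hF _ isOpen_ball,
      by simpa using fun ω => Nat.find_spec (hex ω)⟩
  have hstep : ∀ m, ∀ k ∈ S m, ∃ k' ∈ S (m + 1),
      ∀ ω, dist (p (k' ω)) (p (k ω)) < 2 * (1 / 2) ^ m := by
    rintro m k ⟨hk, hkF⟩
    obtain ⟨k', hk', h⟩ := hF.exists_measurable_refine hp (by positivity) hk hkF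
    refine ⟨k', ⟨hk', fun ω => ?_⟩, fun ω => (h ω).2⟩
    simpa [pow_succ, div_eq_mul_inv] using (h ω).1
  obtain ⟨k₀, hk₀⟩ := hstart
  choose! next hnext hdist using hstep
  let k : ℕ → Ω → ℕ := fun m => Nat.rec k₀ next m
  have hk : ∀ m, k m ∈ S m := fun m => by
    induction m with
    | zero => exact hk₀
    | succ m ih => exact hnext m _ ih
  have hcauchy : ∀ ω, CauchySeq fun m => p (k m ω) := fun ω =>
    cauchySeq_of_le_geometric (1 / 2) 2 (by norm_num) fun m => by
      rw [dist_comm]; exact (hdist m _ (hk m) ω).le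
  choose f hf using fun ω => cauchySeq_tendsto_of_complete (hcauchy ω)
  refine ⟨f, measurable_of_tendsto_metrizable (fun m => measurable_from_top.comp (hk m).1)
    (tendsto_pi_nhds.2 hf), fun ω => ?_⟩
  choose y hyF hy using fun m => (hk m).2 ω
  refine mem_closure_of_tendsto ((hf ω).congr_dist ?_) (Eventually.of_forall hyF)
  exact squeeze_zero (fun _ => dist_nonneg) (fun m => (dist_comm _ _).trans_le (hy m).le)
    (tendsto_pow_atTop_nhds_zero_of_lt_one (by norm_num) (by norm_num))

theorem exists_castaing (hF : IsWeaklyMeasurable F) (hne : ∀ ω, (F ω).Nonempty) :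
    ∃ D : ℕ → Ω → X, (∀ n, Measurable (D n)) ∧
      ∀ ω, closure (range fun n => D n ω) = closure (F ω) := by
  classical
  obtain ⟨p, hp⟩ := exists_dense_seq X
  let B : ℕ × ℕ → Set X := fun kj => ball (p kj.1) (1 / (kj.2 + 1))
  let A : ℕ × ℕ → Set Ω := fun kj => {ω | (F ω ∩ B kj).Nonempty}
  let G : ℕ × ℕ → Ω → Set X := fun kj => (A kj).piecewise (fun ω => F ω ∩ B kj) F
  have hGF : ∀ kj ω, G kj ω ⊆ F ω := fun kj ω => by
    by_cases h : ω ∈ A kj <;> simp [G, h]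
  have hGne : ∀ kj ω, (G kj ω).Nonempty := fun kj ω => by
    by_cases h : ω ∈ A kj
    · rw [show G kj ω = F ω ∩ B kj from if_pos h]; exact h
    · rw [show G kj ω = F ω from if_neg h]; exact hne ω
  have hG : ∀ kj, IsWeaklyMeasurable (G kj) := fun kj =>
    (hF.inter_isOpen isOpen_ball).piecewise (hF _ isOpen_ball) hF
  choose f hfm hfG using fun kj => (hG kj).exists_measurable_mem_closure (hGne kj)
  refine ⟨fun n => f n.unpair, fun n => hfm _, fun ω => ?_⟩
  change closure (range ((fun kj => f kj ω) ∘ Nat.unpair)) = _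
  rw [Nat.surjective_unpair.range_comp]
  refine subset_antisymm (closure_minimal (range_subset_iff.2 fun kj =>
    closure_mono (hGF kj ω) (hfG kj ω)) isClosed_closure)
    (closure_minimal (fun x hx => Metric.mem_closure_iff.2 fun ε hε => ?_) isClosed_closure)
  obtain ⟨j, hj⟩ := exists_nat_one_div_lt (half_pos hε)
  obtain ⟨k, hk⟩ := hp.exists_dist_lt x (ε := 1 / (j + 1)) (by positivity)
  have hA : ω ∈ A (k, j) := ⟨x, hx, hk⟩
  have hfB : dist (f (k, j) ω) (p k) ≤ 1 / (j + 1) := by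
    have := hfG (k, j) ω
    rw [show G (k, j) ω = F ω ∩ B (k, j) from if_pos hA] at this
    exact closure_ball_subset_closedBall (closure_mono inter_subset_right this)
  refine ⟨_, mem_range_self (k, j), ?_⟩
  calc dist x (f (k, j) ω) ≤ dist x (p k) + dist (f (k, j) ω) (p k) := dist_triangle_right _ _ _
    _ < ε := by linarith

end IsWeaklyMeasurable

theorem measurableSet_mem_closure_range [PseudoMetricSpace X] [MeasurableSpace X]
    [OpensMeasurableSpace X] [SecondCountableTopology X] {D : ℕ → Ω → X}
    (hD : ∀ n, Measurable (D n)) :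
    MeasurableSet {p : Ω × X | p.2 ∈ closure (range fun n => D n p.1)} := by
  simp only [mem_closure_range_iff_nat, ofPred_forall, ofPred_exists]
  exact .iInter fun m => .iUnion fun n =>
    measurableSet_lt (measurable_snd.dist ((hD n).comp measurable_fst)) measurable_const

theorem exists_measurable_summable_weights {E : Type*} [NormedAddCommGroup E] [NormedSpace ℝ E]
    [CompleteSpace E] [MeasurableSpace E] [OpensMeasurableSpace E] {D : ℕ → Ω → E}
    (hD : ∀ n, Measurable (D n)) :
    ∃ w : ℕ → Ω → ℝ, (∀ n, Measurable (w n)) ∧ (∀ n ω, 0 < w n ω) ∧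
      ∀ ω, Summable (fun n => w n ω) ∧ Summable fun n => w n ω • D n ω := by
  refine ⟨fun n ω => (1 / 2) ^ n / (1 + ‖D n ω‖), fun n => by fun_prop,
    fun n ω => by positivity, fun ω => ⟨?_, ?_⟩⟩
  · exact summable_geometric_two.of_nonneg_of_le (fun n => by positivity)
      fun n => div_le_self (by positivity) (by simp)
  · refine .of_norm_bounded summable_geometric_two fun n => ?_
    rw [norm_smul, Real.norm_of_nonneg (by positivity), div_mul_eq_mul_div, mul_div_assoc]
    exact mul_le_of_le_one_right (by positivity) ((div_le_one (by positivity)).2 (by simp))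

end Measurable

theorem ri_graph_measurable_and_selector_general
    {Ω : Type*} {ℋ : MeasurableSpace Ω} {d : ℕ}
    (F : Ω → Set (EuclideanSpace ℝ (Fin d)))
    (hne : ∀ ω, (F ω).Nonempty) (hconv : ∀ ω, Convex ℝ (F ω))
    (hmeas : ∀ V : Set (EuclideanSpace ℝ (Fin d)), IsOpen V →
      MeasurableSet {ω | (F ω ∩ V).Nonempty}) :
    MeasurableSet {p : Ω × EuclideanSpace ℝ (Fin d) |
        p.2 ∈ intrinsicInterior ℝ (F p.1)} ∧
      ∃ f : Ω → EuclideanSpace ℝ (Fin d),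
        Measurable f ∧ ∀ ω, f ω ∈ intrinsicInterior ℝ (F ω) := by
  obtain ⟨D, hDm, hD⟩ := IsWeaklyMeasurable.exists_castaing (F := F) hmeas hne
  have hri : ∀ ω x, x ∈ intrinsicInterior ℝ (F ω) ↔ x ∈ closure (range fun n => D n ω) ∧
      ∀ n, ∃ q : ℚ, 0 < q ∧ x + (q : ℝ) • (x - D n ω) ∈ closure (range fun n => D n ω) :=
    fun ω x => by rw [(hconv ω).mem_intrinsicInterior_iff_of_closure_range_eq (hD ω), hD ω]
  have hG := measurableSet_mem_closure_range hDm
  refine ⟨?_, ?_⟩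
  · simp only [hri]
    refine measurableSet_setOfPred.2 <| (measurableSet_setOfPred.1 hG).and <|
      Measurable.forall fun n => Measurable.exists fun q => measurable_const.and ?_
    have hray : Measurable fun p : Ω × EuclideanSpace ℝ (Fin d) =>
        (p.1, p.2 + (q : ℝ) • (p.2 - D n p.1)) := by fun_prop
    exact measurableSet_setOfPred.1 (hray hG)
  · obtain ⟨w, hwm, hw, hws⟩ := exists_measurable_summable_weights hDm
    exact ⟨fun ω => (∑' n, w n ω)⁻¹ • ∑' n, w n ω • D n ω,
      (Measurable.tsum hwm).inv.smul (Measurable.tsum fun n => (hwm n).smul (hDm n)),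
      fun ω => (hconv ω).inv_smul_mem_intrinsicInterior_of_hasSum (hD ω) (hw · ω)
        (hws ω).1.hasSum (hws ω).2.hasSum⟩

/-- If `F` is measurable with nonempty convex values and measurable graph, then
the relative-interior map `ω ↦ ri (F ω)` has measurable graph and admits a
measurable selector. -/
theorem ri_graph_measurable_and_selector
    {Ω : Type*} {ℋ : MeasurableSpace Ω} {μ : Measure Ω} [IsProbabilityMeasure μ]
    [μ.IsComplete] {d : ℕ}
    (F : Ω → Set (EuclideanSpace ℝ (Fin d)))
    (hne : ∀ ω, (F ω).Nonempty) (hconv : ∀ ω, Convex ℝ (F ω))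
    (hmeas : ∀ V : Set (EuclideanSpace ℝ (Fin d)), IsOpen V →
      MeasurableSet {ω | (F ω ∩ V).Nonempty})
    (hgr : MeasurableSet {p : Ω × EuclideanSpace ℝ (Fin d) | p.2 ∈ F p.1}) :
    MeasurableSet {p : Ω × EuclideanSpace ℝ (Fin d) |
        p.2 ∈ intrinsicInterior ℝ (F p.1)} ∧
      ∃ f : Ω → EuclideanSpace ℝ (Fin d),
        Measurable f ∧ ∀ ω, f ω ∈ intrinsicInterior ℝ (F ω) :=
  ri_graph_measurable_and_selector_general (ℋ := ℋ) F hne hconv hmeas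
end

section
/- Let (Ω, ℱ_0 ⊆ ℱ_1 ⊆ … ⊆ ℱ_N, P) be a filtered probability space and (x_n)_{n=0}^N an adapted ℝ^d-valued process such that for each n = 1,…,N there exists an ℱ_n-measurable random variable γ_n > 0 with E[γ_n | ℱ_{n-1}] = 1 and x_{n-1} = E[γ_n x_n | ℱ_{n-1}] a.s. Then the measure Q' with density dQ'/dP = ∏_{k=1}^N γ_k is a probability measure equivalent to P under which x is a generalized martingale: x_{n-1} = E_{Q'}[x_n | ℱ_{n-1}] a.s. for all n. -/
open MeasureTheory Finset

/-!
Write `z n = ∏_{k=1}^n γ k` and `Q n` for the measure with density `z n` with respect to `P`.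
Since `z n` is `ℱ n`-measurable and `E[γ (n+1) | ℱ n] = 1`, the measures `Q (n+1)` and `Q n`
agree on `ℱ n`; by induction `Q' = Q N` agrees with `Q n` on `ℱ n`. This gives `Q' Ω = P Ω = 1`
and `∫_A f dQ' = ∫_A z n • f dP` for `ℱ n`-measurable `f` and `A ∈ ℱ n`. For `A ∈ ℱ n`, pulling
the `ℱ n`-measurable factor `z n` out of `E[γ (n+1) • x (n+1) | ℱ n] = x n` yields
`∫_A x (n+1) dQ' = ∫_A z n • γ (n+1) • x (n+1) dP = ∫_A z n • x n dP = ∫_A x n dQ'`.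
-/

section WithDensity

variable {Ω E : Type*} {m mΩ : MeasurableSpace Ω} {μ : Measure Ω} [NormedAddCommGroup E]

lemma integrable_of_condExp_ae_eq_one [NeZero μ] {f : Ω → ℝ} (h : μ[f|m] =ᵐ[μ] fun _ => 1) :
    Integrable f μ := by
  by_contra hf
  rw [condExp_of_not_integrable hf] at h
  obtain ⟨_, h⟩ := h.exists
  exact zero_ne_one h

lemma trim_withDensity_ofReal_of_condExp_ae_eq_one [IsFiniteMeasure μ] (hm : m ≤ mΩ)
    {γ : Ω → ℝ} (hγ : 0 ≤ᵐ[μ] γ) (hcond : μ[γ|m] =ᵐ[μ] fun _ => 1) :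
    (μ.withDensity fun ω => ENNReal.ofReal (γ ω)).trim hm = μ.trim hm := by
  rcases eq_zero_or_neZero μ with rfl | _
  · simp
  have hint : Integrable γ μ := integrable_of_condExp_ae_eq_one hcond
  refine @Measure.ext _ m _ _ fun s hs => ?_
  rw [trim_measurableSet_eq hm hs, trim_measurableSet_eq hm hs, withDensity_apply _ (hm s hs),
    ← ofReal_integral_eq_lintegral_ofReal hint.integrableOn (ae_restrict_of_ae hγ),
    ← setIntegral_condExp hm hint hs, setIntegral_congr_ae (hm s hs) (hcond.mono fun _ h _ => h),
    setIntegral_const, smul_eq_mul, mul_one, ofReal_measureReal (measure_ne_top μ s)]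

lemma integrable_of_trim_eq {ν ν' : Measure Ω} (hm : m ≤ mΩ) (h : ν.trim hm = ν'.trim hm)
    {f : Ω → E} (hf : StronglyMeasurable[m] f) (hint : Integrable f ν) : Integrable f ν' :=
  integrable_of_integrable_trim hm (h ▸ hint.trim hm hf)

variable [NormedSpace ℝ E]

lemma integrable_withDensity_ofReal_iff {Z : Ω → ℝ} (hZm : AEMeasurable Z μ) (hZ : 0 ≤ᵐ[μ] Z)
    {f : Ω → E} :
    Integrable f (μ.withDensity fun ω => ENNReal.ofReal (Z ω)) ↔
      Integrable (fun ω => Z ω • f ω) μ := by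
  refine (integrable_withDensity_iff_integrable_coe_smul₀ hZm.real_toNNReal).trans
    (integrable_congr ?_)
  filter_upwards [hZ] with ω hω
  rw [Real.coe_toNNReal _ hω]

lemma setIntegral_eq_of_trim_eq {ν ν' : Measure Ω} (hm : m ≤ mΩ) (h : ν.trim hm = ν'.trim hm)
    {f : Ω → E} (hf : StronglyMeasurable[m] f) {s : Set Ω} (hs : MeasurableSet[m] s) :
    ∫ ω in s, f ω ∂ν = ∫ ω in s, f ω ∂ν' := by
  rw [setIntegral_trim hm hf hs, h, ← setIntegral_trim hm hf hs]

lemma setIntegral_withDensity_ofReal {Z : Ω → ℝ} (hZm : AEMeasurable Z μ) (hZ : 0 ≤ᵐ[μ] Z)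
    (f : Ω → E) {s : Set Ω} (hs : MeasurableSet s) :
    ∫ ω in s, f ω ∂(μ.withDensity fun ω => ENNReal.ofReal (Z ω)) = ∫ ω in s, Z ω • f ω ∂μ := by
  refine (setIntegral_withDensity_eq_setIntegral_smul₀ hZm.real_toNNReal.restrict f hs).trans
    (setIntegral_congr_ae hs ?_)
  filter_upwards [hZ] with ω hω _
  rw [NNReal.smul_def, Real.coe_toNNReal _ hω]

lemma setIntegral_smul_eq_of_ae_eq_condExp [CompleteSpace E] (hm : m ≤ mΩ)
    [SigmaFinite (μ.trim hm)] {Z : Ω → ℝ} {g y : Ω → E} (hZ : StronglyMeasurable[m] Z)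
    (hZg : Integrable (fun ω => Z ω • g ω) μ) (hg : Integrable g μ) (hy : y =ᵐ[μ] μ[g|m])
    {s : Set Ω} (hs : MeasurableSet[m] s) :
    ∫ ω in s, Z ω • g ω ∂μ = ∫ ω in s, Z ω • y ω ∂μ := by
  refine (setIntegral_condExp hm hZg hs).symm.trans (setIntegral_congr_ae (hm s hs) ?_)
  filter_upwards [condExp_smul_of_aestronglyMeasurable_left hZ.aestronglyMeasurable hZg hg, hy]
    with ω h hyω _
  rw [hyω]
  exact h

end WithDensity

section DensityProcess

variable {Ω E : Type*} {mΩ : MeasurableSpace Ω} [NormedAddCommGroup E] [NormedSpace ℝ E]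

def densityProcess (γ : ℕ → Ω → ℝ) (n : ℕ) (ω : Ω) : ℝ :=
  ∏ k ∈ Icc 1 n, γ k ω

noncomputable def densityMeasure (P : Measure Ω) (γ : ℕ → Ω → ℝ) (n : ℕ) : Measure Ω :=
  P.withDensity fun ω => ENNReal.ofReal (densityProcess γ n ω)

structure IsConditionalDensitySeq (P : Measure Ω) (ℱ : Filtration ℕ mΩ) (γ : ℕ → Ω → ℝ) (N : ℕ) :
    Prop where
  measurable : ∀ n < N, Measurable[ℱ (n + 1)] (γ (n + 1))
  pos : ∀ n < N, ∀ᵐ ω ∂P, 0 < γ (n + 1) ω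
  condExp_eq_one : ∀ n < N, P[γ (n + 1) | ℱ n] =ᵐ[P] fun _ => 1

variable {P : Measure Ω} {ℱ : Filtration ℕ mΩ} {γ : ℕ → Ω → ℝ} {N n : ℕ}

lemma densityProcess_zero : densityProcess γ 0 = 1 := by
  ext
  simp [densityProcess]

lemma densityProcess_succ (n : ℕ) (ω : Ω) :
    densityProcess γ (n + 1) ω = densityProcess γ n ω * γ (n + 1) ω :=
  prod_Icc_succ_top (Nat.le_add_left 1 n) _

lemma densityMeasure_zero : densityMeasure P γ 0 = P := by
  simp [densityMeasure, densityProcess_zero]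

namespace IsConditionalDensitySeq

lemma measurable_densityProcess (hγ : IsConditionalDensitySeq P ℱ γ N) (hn : n ≤ N) :
    Measurable[ℱ n] (densityProcess γ n) := by
  induction n with
  | zero =>
    rw [densityProcess_zero]
    exact measurable_const
  | succ n ih =>
    rw [funext (densityProcess_succ n)]
    exact ((ih (by omega)).mono (ℱ.mono n.le_succ) le_rfl).mul (hγ.measurable n hn)

lemma densityProcess_pos (hγ : IsConditionalDensitySeq P ℱ γ N) (hn : n ≤ N) :
    ∀ᵐ ω ∂P, 0 < densityProcess γ n ω := by
  induction n with
  | zero => simp [densityProcess_zero]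
  | succ n ih =>
    filter_upwards [ih (by omega), hγ.pos n hn] with ω hz hγω
    rw [densityProcess_succ]
    exact mul_pos hz hγω

lemma densityMeasure_succ (hγ : IsConditionalDensitySeq P ℱ γ N) (hn : n < N) :
    densityMeasure P γ (n + 1) = (P.withDensity fun ω => ENNReal.ofReal (γ (n + 1) ω)).withDensity
      fun ω => ENNReal.ofReal (densityProcess γ n ω) := by
  rw [densityMeasure, ← withDensity_mul P
    ((hγ.measurable n hn).mono (ℱ.le _) le_rfl).ennreal_ofReal
    ((hγ.measurable_densityProcess hn.le).mono (ℱ.le _) le_rfl).ennreal_ofReal]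
  refine withDensity_congr_ae ?_
  filter_upwards [hγ.densityProcess_pos hn.le] with ω hz
  rw [densityProcess_succ, ENNReal.ofReal_mul hz.le, mul_comm]
  rfl

lemma trim_densityMeasure_succ [IsFiniteMeasure P] (hγ : IsConditionalDensitySeq P ℱ γ N)
    (hn : n < N) :
    (densityMeasure P γ (n + 1)).trim (ℱ.le n) = (densityMeasure P γ n).trim (ℱ.le n) := by
  rw [hγ.densityMeasure_succ hn,
    trim_withDensity (ℱ.le n) (hγ.measurable_densityProcess hn.le).ennreal_ofReal,
    trim_withDensity_ofReal_of_condExp_ae_eq_one (ℱ.le n) ((hγ.pos n hn).mono fun _ h => h.le)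
      (hγ.condExp_eq_one n hn),
    ← trim_withDensity (ℱ.le n) (hγ.measurable_densityProcess hn.le).ennreal_ofReal]
  rfl

lemma trim_densityMeasure [IsFiniteMeasure P] (hγ : IsConditionalDensitySeq P ℱ γ N)
    (hn : n ≤ N) :
    (densityMeasure P γ N).trim (ℱ.le n) = (densityMeasure P γ n).trim (ℱ.le n) := by
  suffices ∀ M, n ≤ M → M ≤ N →
      (densityMeasure P γ M).trim (ℱ.le n) = (densityMeasure P γ n).trim (ℱ.le n) from
    this N hn le_rfl
  intro M hnM hMN
  induction M, hnM using Nat.le_induction with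
  | base => rfl
  | succ M hnM ih =>
    rw [← trim_trim (hm₁₂ := ℱ.mono hnM) (hm₂ := ℱ.le M), hγ.trim_densityMeasure_succ hMN,
      trim_trim, ih (by omega)]

lemma densityMeasure_univ [IsFiniteMeasure P] (hγ : IsConditionalDensitySeq P ℱ γ N) :
    densityMeasure P γ N Set.univ = P Set.univ := by
  rw [← trim_measurableSet_eq (ℱ.le 0) MeasurableSet.univ, hγ.trim_densityMeasure N.zero_le,
    densityMeasure_zero, trim_measurableSet_eq _ MeasurableSet.univ]

lemma absolutelyContinuous_densityMeasure (hγ : IsConditionalDensitySeq P ℱ γ N) :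
    P ≪ densityMeasure P γ N := by
  refine withDensity_absolutelyContinuous'
    ((hγ.measurable_densityProcess le_rfl).mono (ℱ.le N) le_rfl).ennreal_ofReal.aemeasurable ?_
  filter_upwards [hγ.densityProcess_pos le_rfl] with ω hz
  exact ENNReal.ofReal_ne_zero_iff.mpr hz

lemma integrable_smul_of_integrable_densityMeasure [IsFiniteMeasure P]
    (hγ : IsConditionalDensitySeq P ℱ γ N) (hn : n ≤ N) {f : Ω → E}
    (hf : StronglyMeasurable[ℱ n] f) (hint : Integrable f (densityMeasure P γ N)) :
    Integrable (fun ω => densityProcess γ n ω • f ω) P :=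
  (integrable_withDensity_ofReal_iff
    ((hγ.measurable_densityProcess hn).mono (ℱ.le n) le_rfl).aemeasurable
    ((hγ.densityProcess_pos hn).mono fun _ h => h.le)).1
    (integrable_of_trim_eq (ℱ.le n) (hγ.trim_densityMeasure hn) hf hint)

lemma setIntegral_densityMeasure [IsFiniteMeasure P] (hγ : IsConditionalDensitySeq P ℱ γ N)
    (hn : n ≤ N) {f : Ω → E} (hf : StronglyMeasurable[ℱ n] f) {s : Set Ω}
    (hs : MeasurableSet[ℱ n] s) :
    ∫ ω in s, f ω ∂densityMeasure P γ N = ∫ ω in s, densityProcess γ n ω • f ω ∂P := by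
  rw [setIntegral_eq_of_trim_eq (ℱ.le n) (hγ.trim_densityMeasure hn) hf hs]
  exact setIntegral_withDensity_ofReal
    ((hγ.measurable_densityProcess hn).mono (ℱ.le n) le_rfl).aemeasurable
    ((hγ.densityProcess_pos hn).mono fun _ h => h.le) f (ℱ.le n s hs)

lemma ae_eq_condExp_densityMeasure [CompleteSpace E] [IsFiniteMeasure P]
    (hγ : IsConditionalDensitySeq P ℱ γ N) (hn : n < N) {f g : Ω → E}
    (hf : StronglyMeasurable[ℱ (n + 1)] f) (hg : StronglyMeasurable[ℱ n] g)
    (hγf : Integrable (fun ω => γ (n + 1) ω • f ω) P)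
    (hgf : g =ᵐ[P] P[fun ω => γ (n + 1) ω • f ω | ℱ n])
    (hfQ : Integrable f (densityMeasure P γ N)) (hgQ : Integrable g (densityMeasure P γ N)) :
    g =ᵐ[densityMeasure P γ N] (densityMeasure P γ N)[f | ℱ n] := by
  have : IsFiniteMeasure (densityMeasure P γ N) :=
    ⟨by rw [hγ.densityMeasure_univ]; exact measure_lt_top P _⟩
  have hsmul : ∀ ω, densityProcess γ (n + 1) ω • f ω =
      densityProcess γ n ω • γ (n + 1) ω • f ω := fun ω => by
    rw [densityProcess_succ, mul_smul]
  refine ae_eq_condExp_of_forall_setIntegral_eq (ℱ.le n) hfQ (fun s _ _ => hgQ.integrableOn)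
    (fun s hs _ => ?_) hg.aestronglyMeasurable
  have hZf : Integrable (fun ω => densityProcess γ n ω • γ (n + 1) ω • f ω) P := by
    simpa only [hsmul] using hγ.integrable_smul_of_integrable_densityMeasure hn hf hfQ
  calc ∫ ω in s, g ω ∂densityMeasure P γ N
      = ∫ ω in s, densityProcess γ n ω • g ω ∂P := hγ.setIntegral_densityMeasure hn.le hg hs
    _ = ∫ ω in s, densityProcess γ n ω • γ (n + 1) ω • f ω ∂P :=
      (setIntegral_smul_eq_of_ae_eq_condExp (ℱ.le n)
        (hγ.measurable_densityProcess hn.le).stronglyMeasurable hZf hγf hgf hs).symm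
    _ = ∫ ω in s, densityProcess γ (n + 1) ω • f ω ∂P := by simp only [hsmul]
    _ = ∫ ω in s, f ω ∂densityMeasure P γ N :=
      (hγ.setIntegral_densityMeasure hn hf (ℱ.mono n.le_succ s hs)).symm

end IsConditionalDensitySeq

end DensityProcess

theorem equivalent_martingale_measure_from_densities_general
    {Ω : Type*} {mΩ : MeasurableSpace Ω} {P : Measure Ω} [IsProbabilityMeasure P]
    {d N : ℕ} (ℱ : ℕ → MeasurableSpace Ω) (hmono : Monotone ℱ) (hle : ∀ n, ℱ n ≤ mΩ)
    (x : ℕ → Ω → EuclideanSpace ℝ (Fin d))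
    (hadapted : ∀ n, n ≤ N → Measurable[ℱ n] (x n))
    (γ : ℕ → Ω → ℝ)
    (hγmeas : ∀ n, 1 ≤ n → n ≤ N → Measurable[ℱ n] (γ n))
    (hγpos : ∀ n, 1 ≤ n → n ≤ N → ∀ᵐ ω ∂P, 0 < γ n ω)
    (hγcond : ∀ n, 1 ≤ n → n ≤ N → P[γ n | ℱ (n - 1)] =ᵐ[P] fun _ => (1 : ℝ))
    (hγxint : ∀ n, 1 ≤ n → n ≤ N → Integrable (fun ω => γ n ω • x n ω) P)
    (hrep : ∀ n, 1 ≤ n → n ≤ N →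
      x (n - 1) =ᵐ[P] P[fun ω => γ n ω • x n ω | ℱ (n - 1)])
    (Q' : @Measure Ω mΩ)
    (hQ' : Q' = P.withDensity (fun ω => ENNReal.ofReal (∏ k ∈ Icc 1 N, γ k ω)))
    (hxQ' : ∀ n, n ≤ N → Integrable (x n) Q') :
    IsProbabilityMeasure Q' ∧ Q' ≪ P ∧ P ≪ Q' ∧
      ∀ n, 1 ≤ n → n ≤ N → x (n - 1) =ᵐ[Q'] Q'[x n | ℱ (n - 1)] := by
  let 𝒢 : Filtration ℕ mΩ := ⟨ℱ, hmono, hle⟩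
  have hγ : IsConditionalDensitySeq P 𝒢 γ N :=
    ⟨fun n hn => hγmeas (n + 1) n.succ_pos hn, fun n hn => hγpos (n + 1) n.succ_pos hn,
      fun n hn => by simpa using hγcond (n + 1) n.succ_pos hn⟩
  have hQ : Q' = densityMeasure P γ N := hQ'
  subst hQ
  refine ⟨⟨by rw [hγ.densityMeasure_univ, measure_univ]⟩, withDensity_absolutelyContinuous _ _,
    hγ.absolutelyContinuous_densityMeasure, fun n h1n hnN => ?_⟩
  obtain ⟨n, rfl⟩ := Nat.exists_eq_add_of_le' h1n
  exact hγ.ae_eq_condExp_densityMeasure hnN (hadapted _ hnN).stronglyMeasurable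
    (hadapted n (by omega)).stronglyMeasurable (hγxint _ h1n hnN) (hrep _ h1n hnN)
    (hxQ' _ hnN) (hxQ' n (by omega))

/-- If `x` is adapted and for each `n` there is an `ℱ n`-measurable `γ n > 0` with
`E[γ n | ℱ (n-1)] = 1` and `x (n-1) = E[γ n • x n | ℱ (n-1)]` a.s., then the
measure `Q'` with density `∏_{k=1}^N γ k` is a probability measure equivalent to
`P` under which `x` is a martingale: `x (n-1) = E_{Q'}[x n | ℱ (n-1)]` a.s. -/
theorem equivalent_martingale_measure_from_densities
    {Ω : Type*} {mΩ : MeasurableSpace Ω} {P : Measure Ω} [IsProbabilityMeasure P]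
    {d N : ℕ} (ℱ : ℕ → MeasurableSpace Ω) (hmono : Monotone ℱ) (hle : ∀ n, ℱ n ≤ mΩ)
    (x : ℕ → Ω → EuclideanSpace ℝ (Fin d))
    (hadapted : ∀ n, n ≤ N → Measurable[ℱ n] (x n))
    (γ : ℕ → Ω → ℝ)
    (hγmeas : ∀ n, 1 ≤ n → n ≤ N → Measurable[ℱ n] (γ n))
    (hγpos : ∀ n, 1 ≤ n → n ≤ N → ∀ᵐ ω ∂P, 0 < γ n ω)
    (hγint : ∀ n, 1 ≤ n → n ≤ N → Integrable (γ n) P)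
    (hγcond : ∀ n, 1 ≤ n → n ≤ N → P[γ n | ℱ (n - 1)] =ᵐ[P] fun _ => (1 : ℝ))
    (hγxint : ∀ n, 1 ≤ n → n ≤ N → Integrable (fun ω => γ n ω • x n ω) P)
    (hrep : ∀ n, 1 ≤ n → n ≤ N →
      x (n - 1) =ᵐ[P] P[fun ω => γ n ω • x n ω | ℱ (n - 1)])
    (Q' : @Measure Ω mΩ)
    (hQ' : Q' = P.withDensity (fun ω => ENNReal.ofReal (∏ k ∈ Icc 1 N, γ k ω)))
    (hxQ' : ∀ n, n ≤ N → Integrable (x n) Q') :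
    IsProbabilityMeasure Q' ∧ Q' ≪ P ∧ P ≪ Q' ∧
      ∀ n, 1 ≤ n → n ≤ N → x (n - 1) =ᵐ[Q'] Q'[x n | ℱ (n - 1)] :=
  equivalent_martingale_measure_from_densities_general ℱ hmono hle x hadapted γ hγmeas hγpos hγcond
    hγxint hrep Q' hQ' hxQ'
end

section
/- Let F be an ℱ-measurable set-valued map with nonempty closed values in ℝ^d on a complete probability space (Ω, ℱ, P), ℋ ⊆ ℱ a sub-σ-algebra, and {f_i}_{i=1}^∞ an ℱ-measurable Castaing representation of F. Then the support of the regular conditional upper distribution of F given ℋ satisfies K(F, ℋ; ω) = cl(⋃_{i=1}^∞ K(f_i, ℋ; ω)) for almost every ω, where K(f_i, ℋ; ω) is the support of the regular conditional distribution of f_i given ℋ. -/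
open MeasureTheory
open scoped Classical

theorem aux_support {X : Type*} [MetricSpace X] [MeasurableSpace X] [SecondCountableTopology X]
    (μ : Measure X) {B : Set X} (h : μ B ≠ 0) :
    ∃ z ∈ B, ∀ ε > 0, 0 < μ (Metric.ball z ε) := by
  by_contra hc
  push_neg at hc
  choose! ε hεpos hεnull using hc
  obtain ⟨T, hTc, hTU⟩ := TopologicalSpace.isOpen_iUnion_countable
    (fun z : B => Metric.ball (z : X) (ε z)) (fun z => Metric.isOpen_ball)
  apply h
  have hBsub : B ⊆ ⋃ z ∈ T, Metric.ball (z : X) (ε (z : X)) := by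
    rw [hTU]
    intro x hx
    exact Set.mem_iUnion.2 ⟨⟨x, hx⟩, Metric.mem_ball_self (hεpos x hx)⟩
  refine measure_mono_null hBsub ((measure_biUnion_null_iff hTc).2 ?_)
  intro z _
  exact le_antisymm (le_zero_iff.mpr (le_antisymm (hεnull z z.2) zero_le)) zero_le

theorem aux_key {Ω : Type*} {m : MeasurableSpace Ω} {mΩ : MeasurableSpace Ω}
    {P : Measure Ω} [IsProbabilityMeasure P] (hm : m ≤ mΩ)
    (A : Set Ω) (hA : MeasurableSet[mΩ] A)
    (Ai : ℕ → Set Ω) (hAi : ∀ i, MeasurableSet[mΩ] (Ai i))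
    (hcover : A = ⋃ i, Ai i)
    (p : Ω → ENNReal) (pi : ℕ → Ω → ENNReal)
    (hptop : ∀ ω, p ω ≠ ⊤) (hpitop : ∀ i ω, pi i ω ≠ ⊤)
    (hpim : ∀ i, Measurable[m] (pi i))
    (hp : (fun ω => (p ω).toReal) =ᵐ[P] P[A.indicator (fun _ => (1:ℝ)) | m])
    (hpi : ∀ i, (fun ω => (pi i ω).toReal) =ᵐ[P] P[(Ai i).indicator (fun _ => (1:ℝ)) | m]) :
    ∀ᵐ ω ∂P, (0 < p ω ↔ ∃ i, 0 < pi i ω) := by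
  have hGint : Integrable (A.indicator (fun _ => (1:ℝ))) P :=
    (integrable_const 1).indicator hA
  have hgint : ∀ i, Integrable ((Ai i).indicator (fun _ => (1:ℝ))) P :=
    fun i => (integrable_const 1).indicator (hAi i)
  -- L1 : each pi ≤ p a.e.
  have L1 : ∀ᵐ ω ∂P, ∀ i, pi i ω ≤ p ω := by
    rw [ae_all_iff]
    intro i
    have hmono : P[(Ai i).indicator (fun _ => (1:ℝ))|m] ≤ᵐ[P] P[A.indicator (fun _ => (1:ℝ))|m] := by
      refine condExp_mono (hgint i) hGint (Filter.Eventually.of_forall fun ω => ?_)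
      refine Set.indicator_le_indicator_of_subset ?_ (fun _ => zero_le_one) ω
      rw [hcover]; exact Set.subset_iUnion Ai i
    filter_upwards [hpi i, hp, hmono] with ω e1 e2 e3
    have : (pi i ω).toReal ≤ (p ω).toReal := by rw [e1, e2]; exact e3
    exact (ENNReal.toReal_le_toReal (hpitop i ω) (hptop ω)).mp this
  -- L2 : on S = {∀ i, pi i = 0}, p = 0 a.e.
  set S : Set Ω := ⋂ i, (pi i) ⁻¹' {0} with hS
  have hSm : MeasurableSet[m] S :=
    MeasurableSet.iInter fun i => (hpim i) (measurableSet_singleton 0)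
  have hSm0 : MeasurableSet[mΩ] S := hm _ hSm
  have hmemS : ∀ ω, ω ∈ S ↔ ∀ i, pi i ω = 0 := by
    intro ω; simp [hS]
  have step1 : ∀ i, P (S ∩ Ai i) = 0 := by
    intro i
    have e1 : ∫ ω in S, ((Ai i).indicator (fun _ => (1:ℝ))) ω ∂P
        = (P (Ai i ∩ S)).toReal := by
      rw [integral_indicator_const (1:ℝ) (hAi i), measureReal_def, Measure.restrict_apply (hAi i)]
      simp
    have e2 := setIntegral_condExp hm (hgint i) hSm
    have e3 : ∫ ω in S, (P[(Ai i).indicator (fun _ => (1:ℝ))|m]) ω ∂P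
        = ∫ ω in S, (pi i ω).toReal ∂P :=
      integral_congr_ae (ae_restrict_of_ae (hpi i).symm)
    have e4 : ∫ ω in S, (pi i ω).toReal ∂P = 0 := by
      have : Set.EqOn (fun ω => (pi i ω).toReal) (fun _ => (0:ℝ)) S :=
        fun ω hω => by simp [(hmemS ω).1 hω i]
      rw [setIntegral_congr_fun hSm0 this]
      simp
    have : (P (Ai i ∩ S)).toReal = 0 := by rw [← e1, ← e2, e3, e4]
    rw [Set.inter_comm]
    exact (ENNReal.toReal_eq_zero_iff _).mp this |>.resolve_right (measure_ne_top _ _)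
  have step2 : P (S ∩ A) = 0 := by
    rw [hcover, Set.inter_iUnion]
    exact measure_iUnion_null step1
  have step3 : ∫ ω in S, (A.indicator (fun _ => (1:ℝ))) ω ∂P = 0 := by
    rw [integral_indicator_const (1:ℝ) hA, measureReal_def, Measure.restrict_apply hA]
    rw [Set.inter_comm, step2]; simp
  have step4 : ∀ᵐ ω ∂(P.restrict S), (P[A.indicator (fun _ => (1:ℝ))|m]) ω = 0 := by
    have hnn : 0 ≤ᵐ[P.restrict S] P[A.indicator (fun _ => (1:ℝ))|m] :=
      ae_restrict_of_ae (condExp_nonneg (Filter.Eventually.of_forall fun ω =>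
        Set.indicator_nonneg (fun _ _ => zero_le_one) ω))
    have hint : Integrable (P[A.indicator (fun _ => (1:ℝ))|m]) (P.restrict S) :=
      integrable_condExp.restrict
    exact (integral_eq_zero_iff_of_nonneg_ae hnn hint).mp
      (by rw [← step3]; exact setIntegral_condExp hm hGint hSm)
  have L2 : ∀ᵐ ω ∂P, ω ∈ S → p ω = 0 := by
    have h5 : ∀ᵐ ω ∂(P.restrict S), (p ω).toReal = 0 := by
      filter_upwards [step4, ae_restrict_of_ae hp] with ω h1 h2
      rw [h2, h1]
    rw [← ae_restrict_iff' hSm0]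
    filter_upwards [h5] with ω h1
    exact (ENNReal.toReal_eq_zero_iff _).mp h1 |>.resolve_right (hptop ω)
  filter_upwards [L1, L2] with ω h1 h2
  constructor
  · intro hpos
    by_contra hc
    push_neg at hc
    have : ω ∈ S := (hmemS ω).2 fun i => le_antisymm (hc i) zero_le
    exact hpos.ne' (h2 this)
  · rintro ⟨i, hi⟩
    exact lt_of_lt_of_le hi (h1 i)

/-- The space of nonempty closed subsets of `ℝ^d`. -/
def CL (d : ℕ) : Type :=
  {C : Set (EuclideanSpace ℝ (Fin d)) // IsClosed C ∧ C.Nonempty}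

/-- The Effros σ-algebra on `CL d`, generated by the sets
`A_V = {D : D ∩ V ≠ ∅}` for open `V`. -/
instance effros (d : ℕ) : MeasurableSpace (CL d) :=
  MeasurableSpace.generateFrom
    {A | ∃ V : Set (EuclideanSpace ℝ (Fin d)), IsOpen V ∧
      A = {D : CL d | (D.1 ∩ V).Nonempty}}

/-- The support of the regular conditional upper distribution of `F` given `ℋ` is
a.s. the closure of the union of the supports of the regular conditional
distributions of the elements of a Castaing representation of `F`. -/
theorem support_upper_distribution_eq_closure_iUnion
    {Ω : Type*} {m : MeasurableSpace Ω} {mΩ : MeasurableSpace Ω} {P : Measure Ω} [IsProbabilityMeasure P]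
    [P.IsComplete] (hm : m ≤ mΩ) {d : ℕ}
    (F : Ω → Set (EuclideanSpace ℝ (Fin d)))
    (hF : ∀ ω, IsClosed (F ω)) (hFne : ∀ ω, (F ω).Nonempty)
    (hFmeas : ∀ V : Set (EuclideanSpace ℝ (Fin d)), IsOpen V →
      MeasurableSet {ω | (F ω ∩ V).Nonempty})
    -- a Castaing representation of `F`
    (f : ℕ → Ω → EuclideanSpace ℝ (Fin d))
    (hfmeas : ∀ i, Measurable (f i))
    (hfsel : ∀ i ω, f i ω ∈ F ω)
    (hfdense : ∀ ω, F ω ⊆ closure (Set.range fun i => f i ω))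
    -- a regular conditional distribution of `F` (as a random closed set) given `m`
    (Pstar : Ω → Measure (CL d))
    (hPprob : ∀ ω, IsProbabilityMeasure (Pstar ω))
    (hPmeas : ∀ C : Set (CL d), MeasurableSet C → Measurable[m] fun ω => Pstar ω C)
    (hPcond : ∀ C : Set (CL d), MeasurableSet C →
      (fun ω => (Pstar ω C).toReal) =ᵐ[P]
        P[fun ω => if (⟨F ω, hF ω, hFne ω⟩ : CL d) ∈ C then (1 : ℝ) else 0 | m])
    -- regular conditional distributions of the `f i` given `m`
    (κ : ℕ → Ω → Measure (EuclideanSpace ℝ (Fin d)))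
    (hκprob : ∀ i ω, IsProbabilityMeasure (κ i ω))
    (hκmeas : ∀ i (B : Set (EuclideanSpace ℝ (Fin d))), MeasurableSet B →
      Measurable[m] fun ω => κ i ω B)
    (hκcond : ∀ i (B : Set (EuclideanSpace ℝ (Fin d))), MeasurableSet B →
      (fun ω => (κ i ω B).toReal) =ᵐ[P]
        P[fun ω => if f i ω ∈ B then (1 : ℝ) else 0 | m]) :
    ∀ᵐ ω ∂P,
      {y | ∀ ε > 0, 0 < Pstar ω {D : CL d | (D.1 ∩ Metric.ball y ε).Nonempty}} =
        closure (⋃ i, {y | ∀ ε > 0, 0 < κ i ω (Metric.ball y ε)}) := by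
  
  classical
  set q : ℕ → EuclideanSpace ℝ (Fin d) :=
    TopologicalSpace.denseSeq (EuclideanSpace ℝ (Fin d)) with hqdef
  have hq : DenseRange q := TopologicalSpace.denseRange_denseSeq _
  -- ball fitting
  have fit : ∀ (y : EuclideanSpace ℝ (Fin d)) (ε : ℝ), 0 < ε → ∃ (n : ℕ) (r : ℚ), dist y (q n) < (r : ℝ) ∧
      Metric.ball (q n) (r : ℝ) ⊆ Metric.ball y ε := by
    intro y ε hε
    obtain ⟨n, hn⟩ := Metric.denseRange_iff.mp hq y (ε / 3) (by positivity)
    obtain ⟨r, h1, h2⟩ := exists_rat_btwn hn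
    refine ⟨n, r, h1, fun x hx => ?_⟩
    rw [Metric.mem_ball] at hx ⊢
    calc dist x y ≤ dist x (q n) + dist (q n) y := dist_triangle _ _ _
      _ < r + r := by rw [dist_comm (q n) y]; exact add_lt_add hx h1
      _ < ε / 3 + ε / 3 := add_lt_add h2 h2
      _ < ε := by linarith
  -- the key a.e. equivalence for a fixed open set V
  have key : ∀ V : Set (EuclideanSpace ℝ (Fin d)), IsOpen V → ∀ᵐ ω ∂P,
      (0 < Pstar ω {D : CL d | (D.1 ∩ V).Nonempty} ↔ ∃ i, 0 < κ i ω V) := by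
    intro V hV
    have hAV : MeasurableSet {D : CL d | (D.1 ∩ V).Nonempty} :=
      MeasurableSpace.measurableSet_generateFrom ⟨V, hV, rfl⟩
    have hcover : {ω | (F ω ∩ V).Nonempty} = ⋃ i, f i ⁻¹' V := by
      ext ω
      simp only [Set.mem_setOf_eq, Set.mem_iUnion, Set.mem_preimage]
      constructor
      · rintro ⟨x, hxF, hxV⟩
        obtain ⟨z, hzV, i, rfl⟩ := mem_closure_iff.mp (hfdense ω hxF) V hV hxV
        exact ⟨i, hzV⟩
      · rintro ⟨i, hi⟩
        exact ⟨f i ω, hfsel i ω, hi⟩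
    have hfun : (fun ω => if (⟨F ω, hF ω, hFne ω⟩ : CL d) ∈
          {D : CL d | (D.1 ∩ V).Nonempty} then (1:ℝ) else 0)
        = Set.indicator {ω | (F ω ∩ V).Nonempty} (fun _ => (1:ℝ)) := by
      funext ω
      rw [Set.indicator_apply]
      split_ifs with h1 h2 h2 <;>
        first | rfl | exact absurd h1 h2 | exact absurd h2 h1
    have hfuni : ∀ i, (fun ω => if f i ω ∈ V then (1:ℝ) else 0)
        = Set.indicator (f i ⁻¹' V) (fun _ => (1:ℝ)) := by
      intro i
      funext ω
      rw [Set.indicator_apply]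
      split_ifs with h1 h2 h2 <;>
        first | rfl | exact absurd h1 h2 | exact absurd h2 h1
    refine aux_key hm {ω | (F ω ∩ V).Nonempty} (hFmeas V hV)
      (fun i => f i ⁻¹' V) (fun i => (hfmeas i) hV.measurableSet) hcover
      (fun ω => Pstar ω {D : CL d | (D.1 ∩ V).Nonempty}) (fun i ω => κ i ω V)
      (fun ω => by haveI := hPprob ω; exact measure_ne_top _ _)
      (fun i ω => by haveI := hκprob i ω; exact measure_ne_top _ _)
      (fun i => hκmeas i V hV.measurableSet) ?_ ?_
    · rw [← hfun]; exact hPcond _ hAV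
    · intro i; rw [← hfuni i]; exact hκcond i V hV.measurableSet
  have hKey : ∀ᵐ ω ∂P, ∀ (n : ℕ) (r : ℚ),
      (0 < Pstar ω {D : CL d | (D.1 ∩ Metric.ball (q n) (r : ℝ)).Nonempty} ↔
        ∃ i, 0 < κ i ω (Metric.ball (q n) (r : ℝ))) := by
    rw [ae_all_iff]
    intro n
    rw [ae_all_iff]
    intro r
    exact key _ Metric.isOpen_ball
  filter_upwards [hKey] with ω hω
  -- deterministic part
  have hmono : ∀ V W : Set (EuclideanSpace ℝ (Fin d)), V ⊆ W →
      Pstar ω {D : CL d | (D.1 ∩ V).Nonempty} ≤ Pstar ω {D : CL d | (D.1 ∩ W).Nonempty} :=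
    fun V W h => measure_mono fun D hD =>
      Set.Nonempty.mono (Set.inter_subset_inter_right _ h) hD
  have hKclosed : IsClosed {y : EuclideanSpace ℝ (Fin d) | ∀ ε > 0,
      0 < Pstar ω {D : CL d | (D.1 ∩ Metric.ball y ε).Nonempty}} := by
    refine isClosed_of_closure_subset fun y hy ε hε => ?_
    rw [Metric.mem_closure_iff] at hy
    obtain ⟨y', hy', hd⟩ := hy (ε / 2) (by positivity)
    have hsub : Metric.ball y' (ε / 2) ⊆ Metric.ball y ε :=
      Metric.ball_subset_ball' (by rw [dist_comm]; linarith)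
    exact lt_of_lt_of_le (hy' (ε / 2) (by positivity)) (hmono _ _ hsub)
  refine subset_antisymm ?_ (hKclosed.closure_subset_iff.mpr ?_)
  · intro y hy
    rw [Metric.mem_closure_iff]
    intro ε hε
    obtain ⟨n, r, h1, h2⟩ := fit y ε hε
    have hp : 0 < Pstar ω {D : CL d | (D.1 ∩ Metric.ball (q n) (r : ℝ)).Nonempty} := by
      refine lt_of_lt_of_le (hy ((r : ℝ) - dist y (q n)) (by linarith)) (hmono _ _ ?_)
      exact Metric.ball_subset_ball' (by linarith)
    obtain ⟨i, hi⟩ := (hω n r).mp hp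
    obtain ⟨z, hz, hzsupp⟩ := aux_support (κ i ω) hi.ne'
    refine ⟨z, Set.mem_iUnion.2 ⟨i, hzsupp⟩, ?_⟩
    have := h2 hz
    rw [Metric.mem_ball] at this
    rw [dist_comm]
    exact this
  · refine Set.iUnion_subset fun i y hy => ?_
    intro ε hε
    obtain ⟨n, r, h1, h2⟩ := fit y ε hε
    have hκpos : 0 < κ i ω (Metric.ball (q n) (r : ℝ)) := by
      refine lt_of_lt_of_le (hy ((r : ℝ) - dist y (q n)) (by linarith)) (measure_mono ?_)
      exact Metric.ball_subset_ball' (by linarith)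
    exact lt_of_lt_of_le ((hω n r).mpr ⟨i, hκpos⟩) (hmono _ _ h2)
end
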